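/- Let p ≡ 3 (mod 4) and q ≡ 3 (mod 4) be distinct primes and n = p·q. If y is a unit modulo n which is a square modulo n, then exactly one of the four square roots of y modulo n is itself a quadratic residue modulo n (i.e., a square in (ℤ/nℤ)^×). -/

import Mathlib

/-!
Modulo a prime `p ≡ 3 (mod 4)` the element `-1` is a non-residue, so of the two square roots
`±r` of a nonzero square exactly one is a square. By the Chinese remainder theorem the four
square roots of `y` modulo `pq` are the pairs of square roots modulo `p` and modulo `q`, and a
pair is a square exactly when both components are; hence exactly one of them is a square.
-/

namespace FiniteField

variable {F : Type*} [Field F] [Fintype F]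

theorem isSquare_neg_iff_not_isSquare (h : ¬IsSquare (-1 : F)) {x : F} (hx : x ≠ 0) :
    IsSquare (-x) ↔ ¬IsSquare x := by
  classical
  have hneg : quadraticChar F (-x) = -quadraticChar F x := by
    rw [neg_eq_neg_one_mul, map_mul, quadraticChar_neg_one_iff_not_isSquare.mpr h, neg_one_mul]
  rw [← quadraticChar_one_iff_isSquare (neg_ne_zero.mpr hx),
    ← quadraticChar_neg_one_iff_not_isSquare, hneg, neg_eq_iff_eq_neg]

theorem existsUnique_sq_eq_and_isSquare (h : ¬IsSquare (-1 : F)) {a : F} (ha : a ≠ 0)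
    (hsq : IsSquare a) : ∃! x : F, x ^ 2 = a ∧ IsSquare x := by
  obtain ⟨s, rfl, hs⟩ : ∃ s : F, s ^ 2 = a ∧ IsSquare s := by
    obtain ⟨r, rfl⟩ := hsq
    have hr : r ≠ 0 := by rintro rfl; simp at ha
    by_cases hr_sq : IsSquare r
    · exact ⟨r, sq r, hr_sq⟩
    · exact ⟨-r, by rw [neg_sq, sq], (isSquare_neg_iff_not_isSquare h hr).mpr hr_sq⟩
  have hs0 : s ≠ 0 := by rintro rfl; simp at ha
  refine ⟨s, ⟨rfl, hs⟩, fun z ⟨hz, hz_sq⟩ => ?_⟩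
  refine (sq_eq_sq_iff_eq_or_eq_neg.mp hz).resolve_right ?_
  rintro rfl
  exact (isSquare_neg_iff_not_isSquare h hs0).mp hz_sq hs

end FiniteField

theorem Prod.isSquare_iff {M N : Type*} [Mul M] [Mul N] {x : M × N} :
    IsSquare x ↔ IsSquare x.1 ∧ IsSquare x.2 :=
  ⟨fun ⟨r, hr⟩ => ⟨⟨r.1, congrArg Prod.fst hr⟩, ⟨r.2, congrArg Prod.snd hr⟩⟩,
    fun ⟨⟨a, ha⟩, ⟨b, hb⟩⟩ => ⟨(a, b), Prod.ext ha hb⟩⟩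

variable {M N : Type*} [Monoid M] [Monoid N]

theorem MulEquiv.isSquare_apply_iff (e : M ≃* N) {x : M} : IsSquare (e x) ↔ IsSquare x :=
  ⟨fun h => by simpa using h.map e.symm, IsSquare.map e⟩

theorem MulEquiv.existsUnique_sq_eq_and_isSquare_iff (e : M ≃* N) {y : M} :
    (∃! x : N, x ^ 2 = e y ∧ IsSquare x) ↔ ∃! x : M, x ^ 2 = y ∧ IsSquare x := by
  refine (e.toEquiv.existsUnique_congr fun x => ?_).symm
  rw [MulEquiv.toEquiv_eq_coe, MulEquiv.coe_toEquiv, e.isSquare_apply_iff, ← map_pow,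
    e.injective.eq_iff]

theorem Prod.existsUnique_sq_eq_and_isSquare {y : M × N}
    (h₁ : ∃! a : M, a ^ 2 = y.1 ∧ IsSquare a) (h₂ : ∃! b : N, b ^ 2 = y.2 ∧ IsSquare b) :
    ∃! x : M × N, x ^ 2 = y ∧ IsSquare x := by
  obtain ⟨a, ⟨ha, ha_sq⟩, ha_uniq⟩ := h₁
  obtain ⟨b, ⟨hb, hb_sq⟩, hb_uniq⟩ := h₂
  refine ⟨(a, b), ⟨Prod.ext ha hb, Prod.isSquare_iff.mpr ⟨ha_sq, hb_sq⟩⟩, ?_⟩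
  rintro x ⟨hx, hx_sq⟩
  obtain ⟨hx₁_sq, hx₂_sq⟩ := Prod.isSquare_iff.mp hx_sq
  exact Prod.ext (ha_uniq _ ⟨congrArg Prod.fst hx, hx₁_sq⟩) (hb_uniq _ ⟨congrArg Prod.snd hx, hx₂_sq⟩)

theorem ZMod.existsUnique_sq_eq_and_isSquare {p : ℕ} [Fact p.Prime] (hp4 : p % 4 = 3)
    {a : ZMod p} (ha : a ≠ 0) (hsq : IsSquare a) : ∃! x : ZMod p, x ^ 2 = a ∧ IsSquare x :=
  FiniteField.existsUnique_sq_eq_and_isSquare (fun h => ZMod.exists_sq_eq_neg_one_iff.mp h hp4)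
    ha hsq

theorem stmt_12 (p q : ℕ) (hp : p.Prime) (hq : q.Prime) (hp4 : p % 4 = 3)
    (hq4 : q % 4 = 3) (hpq : p ≠ q) (n : ℕ) (hn : n = p * q)
    (y : ZMod n) (hy : IsUnit y) (hsq : IsSquare y) :
    ∃! x : ZMod n, x ^ 2 = y ∧ IsSquare x := by
  subst hn
  have := Fact.mk hp
  have := Fact.mk hq
  let e := ZMod.chineseRemainder ((Nat.coprime_primes hp hq).mpr hpq)
  obtain ⟨hy₁, hy₂⟩ := Prod.isUnit_iff.mp (hy.map e)
  obtain ⟨hsq₁, hsq₂⟩ := Prod.isSquare_iff.mp (hsq.map e)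
  rw [← e.toMulEquiv.existsUnique_sq_eq_and_isSquare_iff]
  exact Prod.existsUnique_sq_eq_and_isSquare
    (ZMod.existsUnique_sq_eq_and_isSquare hp4 hy₁.ne_zero hsq₁)
    (ZMod.existsUnique_sq_eq_and_isSquare hq4 hy₂.ne_zero hsq₂)
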